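/- arXiv:2301.12675 — 2 statements merged into one kernel-verified Lean document; each statement's English description precedes it below -/
import Mathlib

section
/- Let H be a symmetric matrix, E a matrix, β > 0, and suppose x̃ ∈ [l,u] satisfies, with multipliers α, γ ≥ 0: g + H(x̃ − x_k) + βEᵀE(x̃ − x_k) + w − α + γ = 0, αᵀ(x̃ − l) = 0, γᵀ(u − x̃) = 0, where x_k ∈ [l,u] and g + w is the gradient at x_k of the function φ(x) = gᵀ(x − x_k) + (1/2)(x−x_k)ᵀH(x−x_k) + (β/2)‖Ex + v‖² (so w = βEᵀ(Ex_k + v)). Then for d = x̃ − x_k one has ∇φ(x_k)ᵀd ≤ −dᵀ(H + βEᵀE)d. -/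
/-! Writing `Q = H + βEᵀE` and `d = x̃ − x_k`, stationarity says `∇φ(x_k) = α − γ − Q d`, so
`∇φ(x_k)ᵀd = αᵀd − γᵀd − dᵀQd`. Complementarity turns `αᵀd` into `αᵀ(l − x_k) ≤ 0` and `γᵀd`
into `γᵀ(u − x_k) ≥ 0`, since `x_k ∈ [l, u]`. -/

open Matrix

section Complementarity

variable {ι R : Type*} [Fintype ι] [CommRing R] [PartialOrder R] [IsOrderedRing R]

lemma dotProduct_sub_nonpos_of_complementary {α l x y : ι → R} (hα : 0 ≤ α)
    (hcomp : α ⬝ᵥ (y - l) = 0) (hlx : l ≤ x) : α ⬝ᵥ (y - x) ≤ 0 := by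
  have hsplit : α ⬝ᵥ (y - x) = α ⬝ᵥ (y - l) - α ⬝ᵥ (x - l) := by
    rw [← dotProduct_sub, sub_sub_sub_cancel_right]
  rw [hsplit, hcomp, zero_sub, neg_nonpos]
  exact dotProduct_nonneg_of_nonneg hα (sub_nonneg.mpr hlx)

lemma dotProduct_sub_nonneg_of_complementary {γ u x y : ι → R} (hγ : 0 ≤ γ)
    (hcomp : γ ⬝ᵥ (u - y) = 0) (hxu : x ≤ u) : 0 ≤ γ ⬝ᵥ (y - x) := by
  have hsplit : γ ⬝ᵥ (y - x) = γ ⬝ᵥ (u - x) - γ ⬝ᵥ (u - y) := by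
    rw [← dotProduct_sub, sub_sub_sub_cancel_left]
  rw [hsplit, hcomp, sub_zero]
  exact dotProduct_nonneg_of_nonneg hγ (sub_nonneg.mpr hxu)

lemma dotProduct_le_neg_quadForm_of_stationary {p α γ d : ι → R} {Q : Matrix ι ι R}
    (hstat : p + Q *ᵥ d - α + γ = 0) (hαd : α ⬝ᵥ d ≤ 0) (hγd : 0 ≤ γ ⬝ᵥ d) :
    p ⬝ᵥ d ≤ -(d ⬝ᵥ Q *ᵥ d) := by
  have hp : p = α - γ - Q *ᵥ d := by
    rw [← sub_eq_zero, ← hstat]; abel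
  rw [hp, sub_dotProduct, sub_dotProduct, dotProduct_comm (Q *ᵥ d), sub_eq_add_neg _ (d ⬝ᵥ _)]
  exact add_le_of_nonpos_left (sub_nonpos.mpr (hαd.trans hγd))

end Complementarity

theorem x_subproblem_descent_general
    (n m : ℕ) (β : ℝ)
    (H : Matrix (Fin n) (Fin n) ℝ)
    (E : Matrix (Fin m) (Fin n) ℝ) (v : Fin m → ℝ)
    (l u g xk xt d α γ : Fin n → ℝ)
    (hxk : ∀ i, l i ≤ xk i ∧ xk i ≤ u i)
    (hα : ∀ i, 0 ≤ α i) (hγ : ∀ i, 0 ≤ γ i)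
    (hKKT : g + H.mulVec (xt - xk) + β • (Eᵀ * E).mulVec (xt - xk)
        + β • Eᵀ.mulVec (E.mulVec xk + v) - α + γ = 0)
    (hcompα : α ⬝ᵥ (xt - l) = 0) (hcompγ : γ ⬝ᵥ (u - xt) = 0)
    (hd : d = xt - xk) :
    (g + β • Eᵀ.mulVec (E.mulVec xk + v)) ⬝ᵥ d
      ≤ -(d ⬝ᵥ (H + β • (Eᵀ * E)).mulVec d) := by
  subst hd
  have hstat : (g + β • Eᵀ *ᵥ (E *ᵥ xk + v)) + (H + β • (Eᵀ * E)) *ᵥ (xt - xk) - α + γ = 0 := by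
    rw [← hKKT, add_mulVec, smul_mulVec]; abel
  exact dotProduct_le_neg_quadForm_of_stationary hstat
    (dotProduct_sub_nonpos_of_complementary hα hcompα fun i => (hxk i).1)
    (dotProduct_sub_nonneg_of_complementary hγ hcompγ fun i => (hxk i).2)

/-- descent of the x-subproblem objective
`φ(x) = gᵀ(x−x_k) + (1/2)(x−x_k)ᵀH(x−x_k) + (β/2)‖Ex+v‖²` along `d = x̃ − x_k`:
`∇φ(x_k)ᵀd ≤ −dᵀ(H + βEᵀE)d`. -/
theorem x_subproblem_descent
    (n m : ℕ) (β : ℝ) (hβ : 0 < β)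
    (H : Matrix (Fin n) (Fin n) ℝ) (hH : H.IsSymm)
    (E : Matrix (Fin m) (Fin n) ℝ) (v : Fin m → ℝ)
    (l u g xk xt d α γ : Fin n → ℝ)
    (hxk : ∀ i, l i ≤ xk i ∧ xk i ≤ u i)
    (hxt : ∀ i, l i ≤ xt i ∧ xt i ≤ u i)
    (hα : ∀ i, 0 ≤ α i) (hγ : ∀ i, 0 ≤ γ i)
    (hKKT : g + H.mulVec (xt - xk) + β • (Eᵀ * E).mulVec (xt - xk)
        + β • Eᵀ.mulVec (E.mulVec xk + v) - α + γ = 0)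
    (hcompα : α ⬝ᵥ (xt - l) = 0) (hcompγ : γ ⬝ᵥ (u - xt) = 0)
    (hd : d = xt - xk) :
    (g + β • Eᵀ.mulVec (E.mulVec xk + v)) ⬝ᵥ d
      ≤ -(d ⬝ᵥ (H + β • (Eᵀ * E)).mulVec d) :=
  x_subproblem_descent_general n m β H E v l u g xk xt d α γ hxk hα hγ hKKT hcompα hcompγ hd
end

section
/- Lower bound on step sizes along a nonvanishing subsequence: let L be C¹ with uniformly continuous gradient on a compact set containing {u_k + t d_k : t ∈ [0,1], k ∈ K}, suppose ∇L(u_k)ᵀd_k ≤ −d_kᵀM_k d_k with d_kᵀM_kd_k ≥ η‖d_k‖², ‖d_k‖ ≥ ε > 0 and ‖d_k‖ ≤ D for all k ∈ K. Then there exists t* > 0 such that the Armijo condition L(u_k + t d_k) ≤ L(u_k) − tρ d_kᵀM_kd_k holds for all t ∈ (0, t*] and all k ∈ K; consequently, the Armijo step sizes t_k are bounded below by σt* > 0 on K and ‖t_k d_k‖ ≥ σ t* ε. -/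
/-!
Uniform continuity of `∇L` on the compact set `S` bounds the first-order remainder
`L(u + v) - L(u) - ∇L(u) v` by `c ‖v‖` on all short segments in `S`, with `c` independent of
the base point. With `c = (1 - ρ) η ε² / D` the remainder along `t d_k` is at most
`t (1 - ρ) d_kᵀ M_k d_k`, which the descent `-t d_kᵀ M_k d_k` absorbs down to the Armijo
decrease `-t ρ d_kᵀ M_k d_k`. Once the Armijo test holds on all of `(0, t*]`, a rejected trial
step `σ^(j-1)` exceeds `t*`, so the accepted one `σ^j` exceeds `σ t*`.
-/

open Matrix Set

theorem norm_le_sqrt_dotProduct_self {ι : Type*} [Fintype ι] (v : ι → ℝ) :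
    ‖v‖ ≤ √(v ⬝ᵥ v) := by
  refine (pi_norm_le_iff_of_nonneg (Real.sqrt_nonneg _)).2 fun i => ?_
  rw [Real.norm_eq_abs]
  refine Real.abs_le_sqrt ?_
  simpa only [dotProduct, sq] using
    Finset.single_le_sum (f := fun i => v i * v i) (fun i _ => mul_self_nonneg (v i))
      (Finset.mem_univ i)

section FirstOrder

variable {E F : Type*} [NormedAddCommGroup E] [NormedSpace ℝ E]
  [NormedAddCommGroup F] [NormedSpace ℝ F]

theorem IsCompact.exists_pos_norm_sub_sub_fderiv_le {f : E → F} (hf : ContDiff ℝ 1 f)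
    {S : Set E} (hS : IsCompact S) {c : ℝ} (hc : 0 < c) :
    ∃ δ > 0, ∀ x v, (∀ θ ∈ Icc (0 : ℝ) 1, x + θ • v ∈ S) → ‖v‖ < δ →
      ‖f (x + v) - f x - fderiv ℝ f x v‖ ≤ c * ‖v‖ := by
  obtain ⟨δ, hδ, hclose⟩ := Metric.uniformContinuousOn_iff.1
    (hS.uniformContinuousOn_of_continuous (hf.continuous_fderiv one_ne_zero).continuousOn) c hc
  refine ⟨δ, hδ, fun x v hseg hv => ?_⟩
  have hsegS : segment ℝ x (x + v) ⊆ S := by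
    rw [segment_eq_image', add_sub_cancel_left, image_subset_iff]
    exact hseg
  have hxS : x ∈ S := by simpa using hseg 0 (left_mem_Icc.2 zero_le_one)
  have hbound : ∀ y ∈ segment ℝ x (x + v), ‖fderiv ℝ f y - fderiv ℝ f x‖ ≤ c := by
    intro y hy
    have hyx : dist y x < δ := by
      have := segment_subset_closedBall_left x (x + v) hy
      rw [Metric.mem_closedBall, dist_self_add_right] at this
      exact this.trans_lt hv
    rw [← dist_eq_norm]
    exact (hclose y (hsegS hy) x hxS hyx).le
  simpa only [add_sub_cancel_left] using
    (convex_segment x (x + v)).norm_image_sub_le_of_norm_hasFDerivWithin_le'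
      (fun y _ => ((hf.differentiable one_ne_zero) y).hasFDerivAt.hasFDerivWithinAt)
      hbound (left_mem_segment ℝ x (x + v)) (right_mem_segment ℝ x (x + v))

theorem IsCompact.exists_pos_armijo {ι : Type*} {f : E → ℝ} (hf : ContDiff ℝ 1 f)
    {S : Set E} (hS : IsCompact S) {K : Set ι} {x v : ι → E} {A : ι → ℝ} {ρ a D : ℝ}
    (hρ : ρ < 1) (ha : 0 < a) (hD : 0 < D) (hA : ∀ k ∈ K, a ≤ A k)
    (hdesc : ∀ k ∈ K, fderiv ℝ f (x k) (v k) ≤ -A k) (hv : ∀ k ∈ K, ‖v k‖ ≤ D)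
    (hseg : ∀ k ∈ K, ∀ θ ∈ Icc (0 : ℝ) 1, x k + θ • v k ∈ S) :
    ∃ tstar > 0, ∀ k ∈ K, ∀ t, 0 < t → t ≤ tstar →
      f (x k + t • v k) ≤ f (x k) - t * ρ * A k := by
  have hρ' : 0 < 1 - ρ := sub_pos.2 hρ
  obtain ⟨δ, hδ, hrem⟩ :=
    hS.exists_pos_norm_sub_sub_fderiv_le hf (c := (1 - ρ) * a / D) (by positivity)
  refine ⟨min 1 (δ / (2 * D)), by positivity, fun k hk t ht htstar => ?_⟩
  have ht1 : t ≤ 1 := htstar.trans (min_le_left _ _)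
  have hnorm : ‖t • v k‖ ≤ t * D := by
    rw [norm_smul, Real.norm_of_nonneg ht.le]
    exact mul_le_mul_of_nonneg_left (hv k hk) ht.le
  have hshort : ‖t • v k‖ < δ := calc
    ‖t • v k‖ ≤ δ / (2 * D) * D :=
      hnorm.trans (mul_le_mul_of_nonneg_right (htstar.trans (min_le_right _ _)) hD.le)
    _ < δ := by field_simp; linarith
  have hsegt : ∀ θ ∈ Icc (0 : ℝ) 1, x k + θ • t • v k ∈ S := fun θ hθ => by
    rw [smul_smul]
    exact hseg k hk _ ⟨mul_nonneg hθ.1 ht.le, mul_le_one₀ hθ.2 ht.le ht1⟩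
  have hremk := (Real.norm_eq_abs _ ▸ hrem (x k) (t • v k) hsegt hshort).trans
    (mul_le_mul_of_nonneg_left hnorm (by positivity))
  have hlin : fderiv ℝ f (x k) (t • v k) ≤ -(t * A k) := by
    rw [map_smul, smul_eq_mul, ← mul_neg]
    exact mul_le_mul_of_nonneg_left (hdesc k hk) ht.le
  have hcD : (1 - ρ) * a / D * (t * D) ≤ t * (1 - ρ) * A k := calc
    _ = t * (1 - ρ) * a := by field_simp
    _ ≤ t * (1 - ρ) * A k := by gcongr; exact hA k hk
  calc f (x k + t • v k)
      ≤ f (x k) + fderiv ℝ f (x k) (t • v k) + (1 - ρ) * a / D * (t * D) := by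
        linarith [(abs_le.1 hremk).2]
    _ ≤ f (x k) - t * A k + t * (1 - ρ) * A k := by linarith
    _ = f (x k) - t * ρ * A k := by ring

end FirstOrder

theorem mul_lt_pow_of_Ioc_subset_of_pow_pred_notMem {T : Set ℝ} {σ tstar : ℝ} (hσ : 0 < σ)
    (hT : Ioc 0 tstar ⊆ T) {j : ℕ} (hj : 1 ≤ j) (hrej : σ ^ (j - 1) ∉ T) :
    σ * tstar < σ ^ j := by
  have htstar : tstar < σ ^ (j - 1) :=
    lt_of_not_ge fun h => hrej (hT ⟨pow_pos hσ _, h⟩)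
  obtain ⟨i, rfl⟩ := Nat.exists_eq_add_of_le' hj
  simpa [pow_succ'] using mul_lt_mul_of_pos_left htstar hσ

theorem armijo_steps_uniformly_bounded_below_general
    (n : ℕ) (L : (Fin n → ℝ) → ℝ) (hL : ContDiff ℝ 1 L)
    (K : Set ℕ) (u d : ℕ → Fin n → ℝ) (M : ℕ → Matrix (Fin n) (Fin n) ℝ)
    (ρ σ η ε D : ℝ) (hρ1 : ρ < 1) (hσ0 : 0 < σ)
    (hη : 0 < η) (hε : 0 < ε) (hD : 0 < D)
    (hMη : ∀ k ∈ K, η * (d k ⬝ᵥ d k) ≤ d k ⬝ᵥ (M k).mulVec (d k))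
    (hdesc : ∀ k ∈ K, fderiv ℝ L (u k) (d k) ≤ -(d k ⬝ᵥ (M k).mulVec (d k)))
    (hlow : ∀ k ∈ K, ε ≤ Real.sqrt (d k ⬝ᵥ d k))
    (hup : ∀ k ∈ K, Real.sqrt (d k ⬝ᵥ d k) ≤ D)
    (S : Set (Fin n → ℝ)) (hS : IsCompact S)
    (hseg : ∀ k ∈ K, ∀ t : ℝ, 0 ≤ t → t ≤ 1 → u k + t • d k ∈ S) :
    ∃ tstar > 0,
      (∀ k ∈ K, ∀ t : ℝ, 0 < t → t ≤ tstar →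
        L (u k + t • d k) ≤ L (u k) - t * ρ * (d k ⬝ᵥ (M k).mulVec (d k))) ∧
      (∀ k ∈ K, ∀ j : ℕ, 1 ≤ j → σ ^ (j - 1) ≤ 1 →
        ¬ (L (u k + σ ^ (j - 1) • d k)
            ≤ L (u k) - σ ^ (j - 1) * ρ * (d k ⬝ᵥ (M k).mulVec (d k))) →
        σ * tstar < σ ^ j ∧ σ * tstar * ε ≤ σ ^ j * Real.sqrt (d k ⬝ᵥ d k)) := by
  have hcurv : ∀ k ∈ K, η * ε ^ 2 ≤ d k ⬝ᵥ (M k).mulVec (d k) := fun k hk =>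
    (mul_le_mul_of_nonneg_left ((Real.le_sqrt' hε).1 (hlow k hk))
      hη.le).trans (hMη k hk)
  obtain ⟨tstar, htstar, harmijo⟩ := hS.exists_pos_armijo hL hρ1 (by positivity) hD hcurv hdesc
    (fun k hk => (norm_le_sqrt_dotProduct_self (d k)).trans (hup k hk))
    (fun k hk θ hθ => hseg k hk θ hθ.1 hθ.2)
  refine ⟨tstar, htstar, harmijo, fun k hk j hj _ hrej => ?_⟩
  have hstep : σ * tstar < σ ^ j :=
    mul_lt_pow_of_Ioc_subset_of_pow_pred_notMem hσ0 (fun t ht => harmijo k hk t ht.1 ht.2) hj hrej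
  exact ⟨hstep, mul_le_mul hstep.le (hlow k hk) hε.le (pow_pos hσ0 j).le⟩

/-- uniform lower bound on Armijo step sizes along a subsequence on which
the directions neither vanish nor blow up. There is `t* > 0` such that the Armijo
condition holds for all `t ∈ (0, t*]` and all indices `k ∈ K`; consequently any power
`σ^j` whose predecessor `σ^(j-1)` fails the Armijo test satisfies `σ^j > σ t*`, and
`‖σ^j d_k‖ ≥ σ t* ε`. -/
theorem armijo_steps_uniformly_bounded_below
    (n : ℕ) (L : (Fin n → ℝ) → ℝ) (hL : ContDiff ℝ 1 L)
    (K : Set ℕ) (u d : ℕ → Fin n → ℝ) (M : ℕ → Matrix (Fin n) (Fin n) ℝ)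
    (ρ σ η ε D : ℝ) (hρ0 : 0 < ρ) (hρ1 : ρ < 1) (hσ0 : 0 < σ) (hσ1 : σ < 1)
    (hη : 0 < η) (hε : 0 < ε) (hD : 0 < D)
    (hMsym : ∀ k, (M k).IsSymm)
    (hMη : ∀ k ∈ K, η * (d k ⬝ᵥ d k) ≤ d k ⬝ᵥ (M k).mulVec (d k))
    (hdesc : ∀ k ∈ K, fderiv ℝ L (u k) (d k) ≤ -(d k ⬝ᵥ (M k).mulVec (d k)))
    (hlow : ∀ k ∈ K, ε ≤ Real.sqrt (d k ⬝ᵥ d k))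
    (hup : ∀ k ∈ K, Real.sqrt (d k ⬝ᵥ d k) ≤ D)
    (S : Set (Fin n → ℝ)) (hS : IsCompact S)
    (hseg : ∀ k ∈ K, ∀ t : ℝ, 0 ≤ t → t ≤ 1 → u k + t • d k ∈ S) :
    ∃ tstar > 0,
      (∀ k ∈ K, ∀ t : ℝ, 0 < t → t ≤ tstar →
        L (u k + t • d k) ≤ L (u k) - t * ρ * (d k ⬝ᵥ (M k).mulVec (d k))) ∧
      (∀ k ∈ K, ∀ j : ℕ, 1 ≤ j → σ ^ (j - 1) ≤ 1 →
        ¬ (L (u k + σ ^ (j - 1) • d k)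
            ≤ L (u k) - σ ^ (j - 1) * ρ * (d k ⬝ᵥ (M k).mulVec (d k))) →
        σ * tstar < σ ^ j ∧ σ * tstar * ε ≤ σ ^ j * Real.sqrt (d k ⬝ᵥ d k)) :=
  armijo_steps_uniformly_bounded_below_general n L hL K u d M ρ σ η ε D hρ1 hσ0 hη hε hD hMη hdesc
    hlow hup S hS hseg
end
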